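/- arXiv:1404.3625 — 2 statements merged into one kernel-verified Lean document; each statement's English description precedes it below -/
import Mathlib

section
/- For a ≥ b, the space H_{a,b} of bihomogeneous harmonic polynomials on R^{4p} decomposes as the direct sum of H^S_{a,b} = H_{a,b} ∩ Ker E and the image E†(H_{a+1,b-1}). -/
open MvPolynomial

noncomputable section

/-- Index type for the variables `z_1,…,z_{2p}, z̄_1,…,z̄_{2p}` on `ℝ^{4p}`:
the pair `(k, i) : Fin p × Fin 2` encodes the variable with index `2k+1` (for `i = 0`)
or `2k+2` (for `i = 1`); `Sum.inl` gives a `z`-variable, `Sum.inr` a `z̄`-variable. -/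
abbrev QIdx (p : ℕ) := (Fin p × Fin 2) ⊕ (Fin p × Fin 2)

/-- Complex polynomials in the `4p` commuting variables `z_j, z̄_j`, `j = 1,…,2p`. -/
abbrev QPoly (p : ℕ) := MvPolynomial (QIdx p) ℂ

/-- The variable `z_j`. -/
def qz (p : ℕ) (j : Fin p × Fin 2) : QPoly p := X (Sum.inl j)

/-- The variable `z̄_j`. -/
def qzb (p : ℕ) (j : Fin p × Fin 2) : QPoly p := X (Sum.inr j)

/-- Multiplication by `z_j`. -/
def qmz (p : ℕ) (j : Fin p × Fin 2) : Module.End ℂ (QPoly p) := LinearMap.mulLeft ℂ (qz p j)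

/-- Multiplication by `z̄_j`. -/
def qmzb (p : ℕ) (j : Fin p × Fin 2) : Module.End ℂ (QPoly p) := LinearMap.mulLeft ℂ (qzb p j)

/-- `∂_{z_j}`. -/
def qdz (p : ℕ) (j : Fin p × Fin 2) : Module.End ℂ (QPoly p) := (pderiv (Sum.inl j)).toLinearMap

/-- `∂_{z̄_j}`. -/
def qdzb (p : ℕ) (j : Fin p × Fin 2) : Module.End ℂ (QPoly p) := (pderiv (Sum.inr j)).toLinearMap

/-- The Laplace operator `Δ_{4p} = 4 Σ_{j=1}^{2p} ∂_{z_j} ∂_{z̄_j}`. -/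
def qlap (p : ℕ) : Module.End ℂ (QPoly p) := (4 : ℂ) • ∑ j : Fin p × Fin 2, qdz p j * qdzb p j

/-- `r² = Σ_{j=1}^{2p} z_j z̄_j`. -/
def qr2 (p : ℕ) : QPoly p := ∑ j : Fin p × Fin 2, qz p j * qzb p j

/-- The symplectic ladder operator `E = Σ_{k=1}^p (z_{2k-1} ∂_{z̄_{2k}} − z_{2k} ∂_{z̄_{2k-1}})`. -/
def opE (p : ℕ) : Module.End ℂ (QPoly p) :=
  ∑ k : Fin p, (qmz p (k, 0) * qdzb p (k, 1) - qmz p (k, 1) * qdzb p (k, 0))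

/-- The symplectic ladder operator
`E† = −Σ_{k=1}^p (z̄_{2k-1} ∂_{z_{2k}} − z̄_{2k} ∂_{z_{2k-1}})`. -/
def opEd (p : ℕ) : Module.End ℂ (QPoly p) :=
  - ∑ k : Fin p, (qmzb p (k, 0) * qdz p (k, 1) - qmzb p (k, 1) * qdz p (k, 0))

/-- Weight recording the degree in the `z`-variables. -/
def qwz (p : ℕ) : QIdx p → ℕ := Sum.elim (fun _ => 1) (fun _ => 0)

/-- Weight recording the degree in the `z̄`-variables. -/
def qwzb (p : ℕ) : QIdx p → ℕ := Sum.elim (fun _ => 0) (fun _ => 1)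

/-- `P_{a,b}`: polynomials of bidegree `(a,b)`, i.e. `a`-homogeneous in the `z_j` and
`b`-homogeneous in the `z̄_j`. -/
def qPab (p a b : ℕ) : Submodule ℂ (QPoly p) :=
  weightedHomogeneousSubmodule ℂ (qwz p) a ⊓ weightedHomogeneousSubmodule ℂ (qwzb p) b

/-- `H_{a,b}`: harmonic polynomials of bidegree `(a,b)`. -/
def qHab (p a b : ℕ) : Submodule ℂ (QPoly p) := qPab p a b ⊓ LinearMap.ker (qlap p)

/-- `H^S_{a,b} = H_{a,b} ∩ Ker E`: symplectic harmonics of bidegree `(a,b)`. -/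
def qHS (p a b : ℕ) : Submodule ℂ (QPoly p) := qHab p a b ⊓ LinearMap.ker (opE p)

/-- `H^{S†}_{a,b} = H_{a,b} ∩ Ker E†`: adjoint symplectic harmonics of bidegree `(a,b)`. -/
def qHSd (p a b : ℕ) : Submodule ℂ (QPoly p) := qHab p a b ⊓ LinearMap.ker (opEd p)

/-!
`E` and `E†` are derivations (linear vector fields) that commute with `Δ` and shift the
bidegree by `(+1, -1)` and `(-1, +1)`; their commutator `[E, E†]` is the difference of the
Euler operators in `z` and `z̄`, so it acts on `P_{A,B}` as the scalar `A - B`. This is an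
`sl₂`-situation: if `w ∈ P_{a+1,b-1}` and `E E† w = 0`, then along the string
`w, E w, …, E^b w = 0` one gets `E† E^{i+1} w = -(i+1)(a-b+2+i) E^i w` with nonzero
coefficients (as `a ≥ b`), and descending the string forces `w = 0`. So `E E†` is injective,
hence bijective, on the finite-dimensional space `H_{a+1,b-1}`. Injectivity gives
`Ker E ∩ E†(H_{a+1,b-1}) = 0`, and for `f ∈ H_{a,b}`, choosing `w` with `E E† w = E f` splits
`f = (f - E† w) + E† w`.
-/

theorem Derivation.sum_apply {R A M ι : Type*} [CommSemiring R] [CommSemiring A]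
    [Algebra R A] [AddCommMonoid M] [Module A M] [Module R M] (s : Finset ι)
    (D : ι → Derivation R A M) (a : A) : (∑ i ∈ s, D i) a = ∑ i ∈ s, D i a := by
  rw [← Derivation.coeFnAddMonoidHom_apply, map_sum, Finset.sum_apply]
  rfl

theorem Derivation.toLinearMap_mul_eq_of_lie_eq {R A : Type*} [CommRing R] [CommRing A]
    [Algebra R A] {D₁ D₂ D₃ : Derivation R A A} (h : ⁅D₁, D₂⁆ = D₃) :
    (D₁ : Module.End R A) * D₂ = D₂ * D₁ + D₃ := by
  rw [← h, Derivation.commutator_coe_linear_map, Ring.lie_def, add_sub_cancel]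

theorem Module.End.eq_zero_of_commutator_apply_pow_eq_smul {K M : Type*} [Field K] [CharZero K]
    [AddCommGroup M] [Module K M] {E F : Module.End K M} {v : M} {l n : ℕ} (hl : 0 < l)
    (hweight : ∀ i ≤ n, (E * F - F * E) ((E ^ i) v) = ((l + 2 * i : ℕ) : K) • (E ^ i) v)
    (hnil : (E ^ (n + 1)) v = 0) (hv : E (F v) = 0) : v = 0 := by
  -- `(i + 1) * (l + i) = ∑ j ≤ i, (l + 2 * j)`
  have hlower : ∀ i ≤ n, F ((E ^ (i + 1)) v) = -(((i + 1) * (l + i) : ℕ) : K) • (E ^ i) v := by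
    intro i hi
    induction i with
    | zero =>
      have h := hweight 0 (Nat.zero_le _)
      simp only [pow_zero, Module.End.one_apply, LinearMap.sub_apply, Module.End.mul_apply,
        hv] at h
      simp only [zero_add, pow_one, Module.End.one_apply, pow_zero]
      linear_combination (norm := module) -h
    | succ i ih =>
      have h := hweight (i + 1) hi
      rw [LinearMap.sub_apply, Module.End.mul_apply, ih (by omega), map_smul,
        ← Module.End.mul_apply E (E ^ i), ← pow_succ', Module.End.mul_apply F E,
        ← Module.End.mul_apply E (E ^ (i + 1)), ← pow_succ'] at h
      linear_combination (norm := module) -h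
  have hzero : ∀ i ≤ n + 1, (E ^ i) v = 0 := fun i hi => by
    refine Nat.decreasingInduction (motive := fun i _ => (E ^ i) v = 0) (fun i hi ih => ?_) hnil hi
    have hc : (((i + 1) * (l + i) : ℕ) : K) ≠ 0 :=
      Nat.cast_ne_zero.mpr (Nat.mul_ne_zero (by omega) (by omega))
    have h := hlower i (by omega)
    rw [ih, map_zero, eq_comm, neg_smul, neg_eq_zero, smul_eq_zero] at h
    exact h.resolve_left hc
  simpa using hzero 0 (Nat.zero_le _)

theorem Submodule.disjoint_ker_map {R M : Type*} [Ring R] [AddCommGroup M] [Module R M]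
    {H : Submodule R M} {E F : Module.End R M} (hEF : ∀ x ∈ H, E (F x) = 0 → x = 0) :
    Disjoint (LinearMap.ker E) (H.map F) := by
  rw [Submodule.disjoint_def]
  rintro _ hx ⟨w, hw, rfl⟩
  rw [hEF w hw hx, map_zero]

theorem Submodule.inf_ker_sup_map_eq {K M : Type*} [Field K] [AddCommGroup M] [Module K M]
    {H H' : Submodule K M} [FiniteDimensional K H'] {E F : Module.End K M}
    (hE : ∀ x ∈ H, E x ∈ H') (hF : ∀ x ∈ H', F x ∈ H) (hEF : ∀ x ∈ H', E (F x) = 0 → x = 0) :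
    H ⊓ LinearMap.ker E ⊔ H'.map F = H := by
  refine le_antisymm (sup_le inf_le_left (Submodule.map_le_iff_le_comap.mpr hF)) fun f hf => ?_
  let T : H' →ₗ[K] H' := (E * F).restrict fun x hx => hE _ (hF x hx)
  have hT : Function.Injective T := (injective_iff_map_eq_zero T).mpr fun x hx =>
    Subtype.ext (hEF x x.2 (congrArg Subtype.val hx))
  obtain ⟨w, hw⟩ := LinearMap.injective_iff_surjective.mp hT ⟨E f, hE f hf⟩
  have hEw : E (F w) = E f := congrArg Subtype.val hw
  rw [← sub_add_cancel f (F w)]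
  exact Submodule.add_mem_sup ⟨sub_mem hf (hF w w.2), by simp [hEw]⟩ ⟨w, w.2, rfl⟩

namespace MvPolynomial

variable {R σ : Type*}

theorem pderiv_pderiv_comm [CommRing R] (i j : σ) (f : MvPolynomial σ R) :
    pderiv i (pderiv j f) = pderiv j (pderiv i f) := by
  classical
  have h : ⁅pderiv i, pderiv j⁆ = (0 : Derivation R (MvPolynomial σ R) (MvPolynomial σ R)) :=
    derivation_ext fun k => by
      rw [Derivation.commutator_apply, pderiv_X, pderiv_X, Pi.single_apply, Pi.single_apply]
      split_ifs <;> simp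
  simpa [Derivation.commutator_apply, sub_eq_zero] using Derivation.congr_fun h f

theorem pderiv_eq_zero_of_isWeightedHomogeneous [CommSemiring R] {w : σ → ℕ} {n : ℕ}
    {f : MvPolynomial σ R} (hf : f.IsWeightedHomogeneous w n) {i : σ} (hi : n < w i) :
    pderiv i f = 0 := by
  ext m
  rw [coeff_pderiv, coeff_zero]
  by_contra hne
  have hw := hf (left_ne_zero_of_mul hne)
  rw [map_add, Finsupp.weight_single, one_smul] at hw
  omega

theorem IsWeightedHomogeneous.X_mul_pderiv [CommSemiring R] {w : σ → ℕ} {n n' : ℕ}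
    {f : MvPolynomial σ R} (hf : f.IsWeightedHomogeneous w n) {j : σ} (h : n' + w j = n)
    (i : σ) : (X i * pderiv j f).IsWeightedHomogeneous w (w i + n') :=
  (isWeightedHomogeneous_X R w i).mul (hf.pderiv h)

variable [CommSemiring R] [Fintype σ]

def eulerDerivation (w : σ → ℕ) : Derivation R (MvPolynomial σ R) (MvPolynomial σ R) :=
  ∑ i, w i • (X i : MvPolynomial σ R) • pderiv i

theorem eulerDerivation_X (w : σ → ℕ) (i : σ) :
    eulerDerivation w (X i : MvPolynomial σ R) = w i • X i := by
  classical
  simp [eulerDerivation, Derivation.sum_apply, pderiv_X, Pi.single_apply]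

theorem IsWeightedHomogeneous.eulerDerivation_apply {w : σ → ℕ} {n : ℕ}
    {f : MvPolynomial σ R} (hf : f.IsWeightedHomogeneous w n) :
    eulerDerivation w f = n • f := by
  rw [← hf.sum_weight_X_mul_pderiv]
  simp [eulerDerivation, Derivation.sum_apply]

end MvPolynomial

section

variable {p : ℕ}

/-- `opE` as a derivation, so that commutators can be computed on the generators `X i`. -/
def derivationE (p : ℕ) : Derivation ℂ (QPoly p) (QPoly p) :=
  ∑ k : Fin p, ((X (Sum.inl (k, 0)) : QPoly p) • pderiv (Sum.inr (k, 1))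
    - (X (Sum.inl (k, 1)) : QPoly p) • pderiv (Sum.inr (k, 0)))

def derivationEd (p : ℕ) : Derivation ℂ (QPoly p) (QPoly p) :=
  -∑ k : Fin p, ((X (Sum.inr (k, 0)) : QPoly p) • pderiv (Sum.inl (k, 1))
    - (X (Sum.inr (k, 1)) : QPoly p) • pderiv (Sum.inl (k, 0)))

theorem coe_derivationE : (derivationE p : Module.End ℂ (QPoly p)) = opE p :=
  LinearMap.ext fun f => by
    simp [derivationE, opE, qmz, qz, qdzb, Derivation.sum_apply]

theorem coe_derivationEd : (derivationEd p : Module.End ℂ (QPoly p)) = opEd p :=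
  LinearMap.ext fun f => by
    simp [derivationEd, opEd, qmzb, qzb, qdz, Derivation.sum_apply]

theorem lie_derivationE_derivationEd :
    ⁅derivationE p, derivationEd p⁆ = eulerDerivation (qwz p) - eulerDerivation (qwzb p) := by
  refine derivation_ext fun i => ?_
  rcases i with ⟨k, c⟩ | ⟨k, c⟩ <;> fin_cases c <;>
    simp [Derivation.commutator_apply, derivationE, derivationEd, Derivation.sum_apply,
      pderiv_X, Pi.single_apply, eulerDerivation_X, qwz, qwzb]

theorem lie_pderiv_inr_derivationE (j : Fin p × Fin 2) :
    ⁅pderiv (R := ℂ) (Sum.inr j : QIdx p), derivationE p⁆ = 0 := by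
  refine derivation_ext fun i => ?_
  rcases i with ⟨k, c⟩ | ⟨k, c⟩ <;> fin_cases c <;>
    simp [Derivation.commutator_apply, derivationE, Derivation.sum_apply,
      pderiv_X, Pi.single_apply, apply_ite (pderiv _)]

theorem lie_pderiv_inl_zero_derivationE (k : Fin p) :
    ⁅pderiv (R := ℂ) (Sum.inl (k, 0) : QIdx p), derivationE p⁆ = pderiv (Sum.inr (k, 1)) := by
  refine derivation_ext fun i => ?_
  rcases i with ⟨k, c⟩ | ⟨k, c⟩ <;> fin_cases c <;>
    simp [Derivation.commutator_apply, derivationE, Derivation.sum_apply,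
      pderiv_X, Pi.single_apply, apply_ite (pderiv _)]

theorem lie_pderiv_inl_one_derivationE (k : Fin p) :
    ⁅pderiv (R := ℂ) (Sum.inl (k, 1) : QIdx p), derivationE p⁆ = -pderiv (Sum.inr (k, 0)) := by
  refine derivation_ext fun i => ?_
  rcases i with ⟨k, c⟩ | ⟨k, c⟩ <;> fin_cases c <;>
    simp [Derivation.commutator_apply, derivationE, Derivation.sum_apply,
      pderiv_X, Pi.single_apply, apply_ite (pderiv _)]

theorem lie_pderiv_inl_derivationEd (j : Fin p × Fin 2) :
    ⁅pderiv (R := ℂ) (Sum.inl j : QIdx p), derivationEd p⁆ = 0 := by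
  refine derivation_ext fun i => ?_
  rcases i with ⟨k, c⟩ | ⟨k, c⟩ <;> fin_cases c <;>
    simp [Derivation.commutator_apply, derivationEd, Derivation.sum_apply,
      pderiv_X, Pi.single_apply, apply_ite (pderiv _)]

theorem lie_pderiv_inr_zero_derivationEd (k : Fin p) :
    ⁅pderiv (R := ℂ) (Sum.inr (k, 0) : QIdx p), derivationEd p⁆ = -pderiv (Sum.inl (k, 1)) := by
  refine derivation_ext fun i => ?_
  rcases i with ⟨k, c⟩ | ⟨k, c⟩ <;> fin_cases c <;>
    simp [Derivation.commutator_apply, derivationEd, Derivation.sum_apply,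
      pderiv_X, Pi.single_apply, apply_ite (pderiv _)]

theorem lie_pderiv_inr_one_derivationEd (k : Fin p) :
    ⁅pderiv (R := ℂ) (Sum.inr (k, 1) : QIdx p), derivationEd p⁆ = pderiv (Sum.inl (k, 0)) := by
  refine derivation_ext fun i => ?_
  rcases i with ⟨k, c⟩ | ⟨k, c⟩ <;> fin_cases c <;>
    simp [Derivation.commutator_apply, derivationEd, Derivation.sum_apply,
      pderiv_X, Pi.single_apply, apply_ite (pderiv _)]

theorem qlap_eq_smul_sum : qlap p
    = (4 : ℂ) • ∑ k, (qdz p (k, 0) * qdzb p (k, 0) + qdz p (k, 1) * qdzb p (k, 1)) := by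
  simp only [qlap, Fintype.sum_prod_type, Fin.sum_univ_two]

/- Of the `∂`'s in `Δ`, only `∂_{z_j}` fails to commute with `E`, and the two defects
`∂_{z̄_{k,1}} ∂_{z̄_{k,0}}` and `-∂_{z̄_{k,0}} ∂_{z̄_{k,1}}` cancel; likewise for `E†`. -/
theorem qlap_mul_opE : qlap p * opE p = opE p * qlap p := by
  have hzb (j) : qdzb p j * opE p = opE p * qdzb p j := by
    simpa [coe_derivationE, qdz, qdzb] using
      Derivation.toLinearMap_mul_eq_of_lie_eq (lie_pderiv_inr_derivationE j)
  have hz0 (k) : qdz p (k, 0) * opE p = opE p * qdz p (k, 0) + qdzb p (k, 1) := by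
    simpa [coe_derivationE, qdz, qdzb] using
      Derivation.toLinearMap_mul_eq_of_lie_eq (lie_pderiv_inl_zero_derivationE k)
  have hz1 (k) : qdz p (k, 1) * opE p = opE p * qdz p (k, 1) - qdzb p (k, 0) := by
    simpa [coe_derivationE, qdz, qdzb, sub_eq_add_neg] using
      Derivation.toLinearMap_mul_eq_of_lie_eq (lie_pderiv_inl_one_derivationE k)
  have hcomm (k) : qdzb p (k, 1) * qdzb p (k, 0) = qdzb p (k, 0) * qdzb p (k, 1) :=
    LinearMap.ext fun f => pderiv_pderiv_comm _ _ f
  rw [qlap_eq_smul_sum, smul_mul_assoc, mul_smul_comm, Finset.sum_mul, Finset.mul_sum]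
  refine congrArg _ (Finset.sum_congr rfl fun k _ => ?_)
  simp only [add_mul, mul_assoc, hzb]
  simp only [← mul_assoc, hz0, hz1, add_mul, sub_mul, hcomm]
  simp only [mul_add, mul_assoc]
  abel

theorem qlap_mul_opEd : qlap p * opEd p = opEd p * qlap p := by
  have hz (j) : qdz p j * opEd p = opEd p * qdz p j := by
    simpa [coe_derivationEd, qdz, qdzb] using
      Derivation.toLinearMap_mul_eq_of_lie_eq (lie_pderiv_inl_derivationEd j)
  have hzb0 (k) : qdzb p (k, 0) * opEd p = opEd p * qdzb p (k, 0) - qdz p (k, 1) := by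
    simpa [coe_derivationEd, qdz, qdzb, sub_eq_add_neg] using
      Derivation.toLinearMap_mul_eq_of_lie_eq (lie_pderiv_inr_zero_derivationEd k)
  have hzb1 (k) : qdzb p (k, 1) * opEd p = opEd p * qdzb p (k, 1) + qdz p (k, 0) := by
    simpa [coe_derivationEd, qdz, qdzb] using
      Derivation.toLinearMap_mul_eq_of_lie_eq (lie_pderiv_inr_one_derivationEd k)
  have hcomm (k) : qdz p (k, 1) * qdz p (k, 0) = qdz p (k, 0) * qdz p (k, 1) :=
    LinearMap.ext fun f => pderiv_pderiv_comm _ _ f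
  rw [qlap_eq_smul_sum, smul_mul_assoc, mul_smul_comm, Finset.sum_mul, Finset.mul_sum]
  refine congrArg _ (Finset.sum_congr rfl fun k _ => ?_)
  simp only [add_mul, mul_assoc, hzb0, hzb1, mul_sub, mul_add]
  simp only [← mul_assoc, hz, hcomm]
  abel

theorem opE_apply (f : QPoly p) : opE p f = ∑ k : Fin p,
    (X (Sum.inl (k, 0)) * pderiv (Sum.inr (k, 1)) f
      - X (Sum.inl (k, 1)) * pderiv (Sum.inr (k, 0)) f) := by
  simp [opE, qmz, qz, qdzb]

theorem opEd_apply (f : QPoly p) : opEd p f = -∑ k : Fin p,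
    (X (Sum.inr (k, 0)) * pderiv (Sum.inl (k, 1)) f
      - X (Sum.inr (k, 1)) * pderiv (Sum.inl (k, 0)) f) := by
  simp [opEd, qmzb, qzb, qdz]

theorem opE_mem_qPab {A B : ℕ} {f : QPoly p} (hf : f ∈ qPab p A (B + 1)) :
    opE p f ∈ qPab p (A + 1) B := by
  have hterm (m n : Fin p × Fin 2) : X (Sum.inl m) * pderiv (Sum.inr n) f ∈ qPab p (A + 1) B :=
    ⟨by simpa [qwz, add_comm] using
        IsWeightedHomogeneous.X_mul_pderiv hf.1 (n' := A) (by simp [qwz]) (Sum.inl m),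
      by simpa [qwzb] using
        IsWeightedHomogeneous.X_mul_pderiv hf.2 (n' := B) (by simp [qwzb]) (Sum.inl m)⟩
  rw [opE_apply]
  exact sum_mem fun k _ => sub_mem (hterm _ _) (hterm _ _)

theorem opEd_mem_qPab {A B : ℕ} {f : QPoly p} (hf : f ∈ qPab p (A + 1) B) :
    opEd p f ∈ qPab p A (B + 1) := by
  have hterm (m n : Fin p × Fin 2) : X (Sum.inr m) * pderiv (Sum.inl n) f ∈ qPab p A (B + 1) :=
    ⟨by simpa [qwz] using
        IsWeightedHomogeneous.X_mul_pderiv hf.1 (n' := A) (by simp [qwz]) (Sum.inr m),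
      by simpa [qwzb, add_comm] using
        IsWeightedHomogeneous.X_mul_pderiv hf.2 (n' := B) (by simp [qwzb]) (Sum.inr m)⟩
  rw [opEd_apply]
  exact neg_mem (sum_mem fun k _ => sub_mem (hterm _ _) (hterm _ _))

theorem opE_eq_zero_of_mem_qPab_zero {A : ℕ} {f : QPoly p} (hf : f ∈ qPab p A 0) :
    opE p f = 0 := by
  have hzero (n : Fin p × Fin 2) : pderiv (Sum.inr n) f = 0 :=
    pderiv_eq_zero_of_isWeightedHomogeneous hf.2 (by simp [qwzb])
  simp [opE_apply, hzero]

theorem opE_mem_qHab {A B : ℕ} {f : QPoly p} (hf : f ∈ qHab p A (B + 1)) :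
    opE p f ∈ qHab p (A + 1) B := by
  refine ⟨opE_mem_qPab hf.1, LinearMap.mem_ker.mpr ?_⟩
  rw [← Module.End.mul_apply, qlap_mul_opE, Module.End.mul_apply,
    LinearMap.mem_ker.mp hf.2, map_zero]

theorem opEd_mem_qHab {A B : ℕ} {f : QPoly p} (hf : f ∈ qHab p (A + 1) B) :
    opEd p f ∈ qHab p A (B + 1) := by
  refine ⟨opEd_mem_qPab hf.1, LinearMap.mem_ker.mpr ?_⟩
  rw [← Module.End.mul_apply, qlap_mul_opEd, Module.End.mul_apply,
    LinearMap.mem_ker.mp hf.2, map_zero]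

theorem opE_mul_opEd_sub_apply {A B : ℕ} {f : QPoly p} (hf : f ∈ qPab p A B) :
    (opE p * opEd p - opEd p * opE p) f = ((A : ℂ) - B) • f := by
  rw [← coe_derivationE, ← coe_derivationEd, ← Ring.lie_def,
    ← Derivation.commutator_coe_linear_map, lie_derivationE_derivationEd,
    Derivation.coeFn_coe, Derivation.sub_apply,
    IsWeightedHomogeneous.eulerDerivation_apply hf.1,
    IsWeightedHomogeneous.eulerDerivation_apply hf.2, sub_smul, Nat.cast_smul_eq_nsmul,
    Nat.cast_smul_eq_nsmul]

theorem opE_pow_apply_mem_qPab {A B : ℕ} {v : QPoly p} (hv : v ∈ qPab p A B) {i : ℕ}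
    (hi : i ≤ B) : (opE p ^ i) v ∈ qPab p (A + i) (B - i) := by
  induction i with
  | zero => simpa using hv
  | succ i ih =>
    rw [pow_succ', Module.End.mul_apply, ← add_assoc]
    exact opE_mem_qPab (by rw [show B - i = B - (i + 1) + 1 by omega] at ih; exact ih (by omega))

theorem eq_zero_of_opE_opEd_apply_eq_zero {A B : ℕ} (hBA : B < A) {w : QPoly p}
    (hw : w ∈ qPab p A B) (h : opE p (opEd p w) = 0) : w = 0 := by
  refine Module.End.eq_zero_of_commutator_apply_pow_eq_smul (l := A - B) (n := B)
    (by omega) (fun i hi => ?_) ?_ h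
  · rw [opE_mul_opEd_sub_apply (opE_pow_apply_mem_qPab hw hi),
      show A + i = A - B + 2 * i + (B - i) by omega, Nat.cast_add, add_sub_cancel_right]
  · rw [pow_succ', Module.End.mul_apply]
    exact opE_eq_zero_of_mem_qPab_zero (by simpa using opE_pow_apply_mem_qPab hw le_rfl)

theorem isHomogeneous_of_mem_qPab {A B : ℕ} {f : QPoly p} (hf : f ∈ qPab p A B) :
    f.IsHomogeneous (A + B) := by
  intro d hd
  have hz := hf.1 hd
  have hzb := hf.2 hd
  rw [Finsupp.weight_eq_sum] at hz hzb ⊢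
  rw [← hz, ← hzb, ← Finset.sum_add_distrib]
  refine Finset.sum_congr rfl fun i _ => ?_
  rcases i with j | j <;> simp [qwz, qwzb]

instance (A B : ℕ) : FiniteDimensional ℂ (qHab p A B) :=
  have : FiniteDimensional ℂ (homogeneousSubmodule (QIdx p) ℂ (A + B)) :=
    Module.Finite.iff_fg.mpr (homogeneousSubmodule_fg _ ℂ _)
  Submodule.finiteDimensional_of_le (S₁ := qHab p A B)
    (S₂ := homogeneousSubmodule (QIdx p) ℂ (A + B)) fun _ hf => isHomogeneous_of_mem_qPab hf.1

end

/-- For `a ≥ b ≥ 1`, the space `H_{a,b}` decomposes as the direct sum of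
`H^S_{a,b} = H_{a,b} ∩ Ker E` and the image `E†(H_{a+1,b-1})`. -/
theorem stmt_10 (p a b : ℕ) (hab : b ≤ a) (hb : 1 ≤ b) :
    Disjoint (qHS p a b) (Submodule.map (opEd p) (qHab p (a + 1) (b - 1))) ∧
    qHS p a b ⊔ Submodule.map (opEd p) (qHab p (a + 1) (b - 1)) = qHab p a b := by
  obtain ⟨c, rfl⟩ : ∃ c, b = c + 1 := ⟨b - 1, by omega⟩
  rw [Nat.add_sub_cancel]
  have hinj : ∀ w ∈ qHab p (a + 1) c, opE p (opEd p w) = 0 → w = 0 :=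
    fun w hw => eq_zero_of_opE_opEd_apply_eq_zero (by omega) hw.1
  exact ⟨(Submodule.disjoint_ker_map hinj).mono_left inf_le_right,
    Submodule.inf_ker_sup_map_eq (fun _ hf => opE_mem_qHab hf) (fun _ hf => opEd_mem_qHab hf) hinj⟩
end
end

section
/- Let T be the algebra substitution on polynomials in z_1,...,z_{2p}, z̄_1,...,z̄_{2p} sending z_{2k-1} ↦ −z̄_{2k}, z_{2k} ↦ z̄_{2k-1}, z̄_{2k-1} ↦ −z_{2k}, z̄_{2k} ↦ z_{2k-1}. Then E† ∘ T = −T ∘ E and E ∘ T = −T ∘ E†, and consequently T restricts to a linear isomorphism from H^S_{a,b} onto H^{S†}_{b,a}. -/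
open MvPolynomial

noncomputable section

/-- The substitution underlying the twisting map `T`:
`z_{2k-1} ↦ −z̄_{2k}`, `z_{2k} ↦ z̄_{2k-1}`, `z̄_{2k-1} ↦ −z_{2k}`, `z̄_{2k} ↦ z_{2k-1}`. -/
def Ttgt (p : ℕ) : QIdx p → QPoly p :=
  Sum.elim
    (fun kj => if kj.2 = 0 then - qzb p (kj.1, 1) else qzb p (kj.1, 0))
    (fun kj => if kj.2 = 0 then - qz p (kj.1, 1) else qz p (kj.1, 0))


namespace Stmt16Aux

variable {p : ℕ}

/-- The signed permutation underlying `T`. -/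
def sp (p : ℕ) : QIdx p → QIdx p :=
  Sum.elim (fun kj => Sum.inr (kj.1, kj.2 + 1)) (fun kj => Sum.inl (kj.1, kj.2 + 1))

/-- The sign of `T` on each variable. -/
def ep (p : ℕ) : QIdx p → ℂ :=
  Sum.elim (fun kj => if kj.2 = 0 then -1 else 1) (fun kj => if kj.2 = 0 then -1 else 1)

lemma fin2_cases (j : Fin 2) : j = 0 ∨ j = 1 := by omega

lemma fin_add : ((0:Fin 2)+1 = 1) ∧ ((1:Fin 2)+1 = 0) := by constructor <;> rfl

lemma fin_two : (2:Fin 2) = 0 := rfl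

lemma Ttgt_eq (i : QIdx p) : Ttgt p i = C (ep p i) * X (sp p i) := by
  rcases i with ⟨k, j⟩ | ⟨k, j⟩ <;> rcases fin2_cases j with rfl | rfl <;>
    simp [Ttgt, sp, ep, qz, qzb, fin_add.1, fin_add.2, fin_two]

lemma sp_sp (i : QIdx p) : sp p (sp p i) = i := by
  rcases i with ⟨k, j⟩ | ⟨k, j⟩ <;> rcases fin2_cases j with rfl | rfl <;>
    simp [sp, fin_add.1, fin_add.2, fin_two]

lemma sp_inj : Function.Injective (sp p) := by
  intro a b h
  have := congrArg (sp p) h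
  rwa [sp_sp, sp_sp] at this

lemma ep_mul_ep (i : QIdx p) : ep p i * ep p (sp p i) = -1 := by
  rcases i with ⟨k, j⟩ | ⟨k, j⟩ <;> rcases fin2_cases j with rfl | rfl <;>
    simp [ep, sp, fin_add.1, fin_add.2, fin_two]

/-- Chain rule for `T`. -/
lemma pderiv_T (j : QIdx p) (f : QPoly p) :
    pderiv j (aeval (Ttgt p) f) =
      ep p (sp p j) • aeval (Ttgt p) (pderiv (sp p j) f) := by
  induction f using MvPolynomial.induction_on with
  | C a => simp
  | add f g hf hg => simp only [map_add, hf, hg, smul_add]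
  | mul_X f i hf =>
    by_cases h : i = sp p j
    · subst h
      have h1 : sp p (sp p j) = j := sp_sp j
      simp only [map_mul, pderiv_mul, hf, aeval_X, Ttgt_eq, h1, pderiv_X_self, pderiv_C,
        map_add, pderiv_one, smul_eq_C_mul, mul_one, zero_mul, zero_add, map_mul, mul_zero]
      ring
    · have h2 : sp p i ≠ j := fun hh => h (by rw [← sp_sp i, hh])
      have h3 : pderiv (sp p j) (X i : QPoly p) = 0 := pderiv_X_of_ne h
      have h4 : pderiv j (Ttgt p i) = 0 := by
        rw [Ttgt_eq]
        simp [pderiv_C_mul, pderiv_X_of_ne h2]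
      simp only [map_mul, pderiv_mul, hf, aeval_X, h3, h4, mul_zero, add_zero, zero_mul,
        map_zero, smul_eq_C_mul]
      ring

lemma T_mul_var (i : QIdx p) (g : QPoly p) :
    aeval (Ttgt p) (X i * g) = C (ep p i) * X (sp p i) * aeval (Ttgt p) g := by
  rw [map_mul, aeval_X, Ttgt_eq]

lemma sp_inl (k : Fin p) (j : Fin 2) : sp p (Sum.inl (k,j)) = Sum.inr (k, j+1) := rfl
lemma sp_inr (k : Fin p) (j : Fin 2) : sp p (Sum.inr (k,j)) = Sum.inl (k, j+1) := rfl
lemma ep_inl0 (k : Fin p) : ep p (Sum.inl (k,0)) = -1 := by simp [ep]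
lemma ep_inl1 (k : Fin p) : ep p (Sum.inl (k,1)) = 1 := by simp [ep]
lemma ep_inr0 (k : Fin p) : ep p (Sum.inr (k,0)) = -1 := by simp [ep]
lemma ep_inr1 (k : Fin p) : ep p (Sum.inr (k,1)) = 1 := by simp [ep]

lemma EdT (f : QPoly p) : opEd p (aeval (Ttgt p) f) = - aeval (Ttgt p) (opE p f) := by
  simp only [opEd, opE, LinearMap.neg_apply, LinearMap.sum_apply, LinearMap.sub_apply,
    Module.End.mul_apply, qmz, qmzb, qdz, qdzb, LinearMap.mulLeft_apply,
    Derivation.coeFn_coe, map_sum, map_sub, map_mul, neg_inj]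
  refine Finset.sum_congr rfl fun k _ => ?_
  rw [pderiv_T, pderiv_T]
  simp only [sp_inl, fin_add.1, fin_add.2, fin_two, ep_inr0, ep_inr1, qz, qzb, aeval_X,
    Ttgt_eq, sp_inl, ep_inl0, ep_inl1, smul_eq_C_mul, map_neg, map_one]
  ring

lemma ET (f : QPoly p) : opE p (aeval (Ttgt p) f) = - aeval (Ttgt p) (opEd p f) := by
  simp only [opEd, opE, LinearMap.neg_apply, LinearMap.sum_apply, LinearMap.sub_apply,
    Module.End.mul_apply, qmz, qmzb, qdz, qdzb, LinearMap.mulLeft_apply,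
    Derivation.coeFn_coe, map_sum, map_sub, map_mul, map_neg, neg_neg]
  refine Finset.sum_congr rfl fun k _ => ?_
  rw [pderiv_T, pderiv_T]
  simp only [sp_inr, fin_add.1, fin_add.2, fin_two, ep_inr0, ep_inr1, qz, qzb, aeval_X,
    Ttgt_eq, sp_inl, sp_inr, ep_inl0, ep_inl1, smul_eq_C_mul, map_neg, map_one]
  ring

lemma pd_X (a b : QIdx p) (k : QIdx p) : pderiv a (pderiv b (X k : QPoly p)) = 0 := by
  rcases eq_or_ne b k with rfl | h
  · rw [pderiv_X_self]; exact pderiv_one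
  · rw [pderiv_X_of_ne (Ne.symm h), map_zero]

lemma pd_comm (i j : QIdx p) (f : QPoly p) :
    pderiv i (pderiv j f) = pderiv j (pderiv i f) := by
  induction f using MvPolynomial.induction_on with
  | C a => simp
  | add f g hf hg => simp [hf, hg]
  | mul_X f k hf =>
    simp only [pderiv_mul, map_add, pderiv_mul, hf, pd_X, mul_zero, add_zero]
    ring

lemma ep_pair (k : Fin p) (j : Fin 2) :
    ep p (Sum.inl (k,j)) * ep p (Sum.inr (k,j)) = 1 := by
  rcases fin2_cases j with rfl | rfl <;> simp [ep]

lemma lapT (f : QPoly p) : qlap p (aeval (Ttgt p) f) = aeval (Ttgt p) (qlap p f) := by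
  simp only [qlap, LinearMap.smul_apply, LinearMap.sum_apply, Module.End.mul_apply,
    qdz, qdzb, Derivation.coeFn_coe]
  rw [map_smul, map_sum]
  congr 1
  refine Fintype.sum_equiv ((Equiv.refl (Fin p)).prodCongr (Equiv.addRight (1:Fin 2))) _ _ ?_
  rintro ⟨k, i⟩
  rw [pderiv_T, Derivation.map_smul, pderiv_T]
  simp only [sp_inr, sp_inl, smul_smul, Equiv.prodCongr_apply, Equiv.coe_refl,
    Equiv.coe_addRight, Prod.map_apply, id_eq]
  rw [ep_pair, one_smul, pd_comm]

lemma T_monomial (m : QIdx p →₀ ℕ) (c : ℂ) :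
    aeval (Ttgt p) (monomial m c)
      = (∏ i ∈ m.support, ep p i ^ m i) • monomial (Finsupp.mapDomain (sp p) m) c := by
  rw [aeval_monomial, monomial_eq, Finsupp.prod_mapDomain_index_inj sp_inj]
  simp only [Finsupp.prod, Ttgt_eq, mul_pow, ← C_pow, smul_eq_C_mul, algebraMap_eq]
  rw [Finset.prod_mul_distrib, ← map_prod]
  ring

lemma weight_mapDomain (w : QIdx p → ℕ) (m : QIdx p →₀ ℕ) :
    Finsupp.weight w (Finsupp.mapDomain (sp p) m) = Finsupp.weight (w ∘ sp p) m := by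
  simp only [Finsupp.weight, LinearMap.toAddMonoidHom_coe]
  exact Finsupp.linearCombination_mapDomain (R := ℕ) (v' := w) (sp p) m

lemma qwz_comp : (qwz p) ∘ (sp p) = qwzb p := by
  funext i; rcases i with ⟨k, j⟩ | ⟨k, j⟩ <;> rfl

lemma qwzb_comp : (qwzb p) ∘ (sp p) = qwz p := by
  funext i; rcases i with ⟨k, j⟩ | ⟨k, j⟩ <;> rfl

lemma T_mem_Pab {a b : ℕ} {f : QPoly p} (h : f ∈ qPab p a b) :
    aeval (Ttgt p) f ∈ qPab p b a := by
  obtain ⟨h1, h2⟩ := h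
  have hf : aeval (Ttgt p) f = ∑ v ∈ f.support, aeval (Ttgt p) (monomial v (coeff v f)) := by
    conv_lhs => rw [f.as_sum]
    rw [map_sum]
  rw [hf]
  refine Submodule.sum_mem _ fun v hv => ?_
  rw [T_monomial]
  refine Submodule.smul_mem _ _ ?_
  have hc : coeff v f ≠ 0 := mem_support_iff.mp hv
  constructor
  · exact isWeightedHomogeneous_monomial _ _ _
      (by rw [weight_mapDomain, qwz_comp]; exact h2 hc)
  · exact isWeightedHomogeneous_monomial _ _ _
      (by rw [weight_mapDomain, qwzb_comp]; exact h1 hc)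

lemma T_T (f : QPoly p) :
    aeval (Ttgt p) (aeval (Ttgt p) f) = aeval (fun i : QIdx p => - X i) f := by
  have h : (aeval (Ttgt p)).comp (aeval (Ttgt p))
      = (aeval (fun i : QIdx p => (- X i : QPoly p))) := by
    apply MvPolynomial.algHom_ext
    intro i
    simp only [AlgHom.comp_apply, aeval_X]
    rw [Ttgt_eq, map_mul, aeval_C, aeval_X, Ttgt_eq, sp_sp, algebraMap_eq, ← mul_assoc, ← C_mul, ep_mul_ep]
    simp
  exact DFunLike.congr_fun h f

lemma qwz_add_qwzb (i : QIdx p) : qwz p i + qwzb p i = 1 := by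
  rcases i with ⟨k, j⟩ | ⟨k, j⟩ <;> rfl

lemma sum_deg {m : QIdx p →₀ ℕ} {a b : ℕ} (h1 : Finsupp.weight (qwz p) m = a)
    (h2 : Finsupp.weight (qwzb p) m = b) : ∑ i ∈ m.support, m i = a + b := by
  rw [← h1, ← h2, Finsupp.weight_apply, Finsupp.weight_apply, Finsupp.sum, Finsupp.sum,
    ← Finset.sum_add_distrib]
  refine Finset.sum_congr rfl fun i _ => ?_
  rw [smul_eq_mul, smul_eq_mul, ← Nat.left_distrib, qwz_add_qwzb, mul_one]

lemma neg_eval {a b : ℕ} {f : QPoly p} (h : f ∈ qPab p a b) :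
    aeval (fun i : QIdx p => - X i) f = ((-1 : ℂ)^(a+b)) • f := by
  obtain ⟨h1, h2⟩ := h
  conv_lhs => rw [f.as_sum]
  conv_rhs => rw [f.as_sum]
  rw [map_sum, Finset.smul_sum]
  refine Finset.sum_congr rfl fun m hm => ?_
  have hc : coeff m f ≠ 0 := mem_support_iff.mp hm
  rw [aeval_monomial]
  have hX : ∀ i : QIdx p, (-X i : QPoly p) = C (-1:ℂ) * X i := by intro i; simp
  simp only [Finsupp.prod, hX, mul_pow, ← C_pow, algebraMap_eq]
  rw [Finset.prod_mul_distrib, ← map_prod, Finset.prod_pow_eq_pow_sum,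
    sum_deg (h1 hc) (h2 hc), monomial_eq]
  simp only [smul_eq_C_mul, Finsupp.prod]
  ring

end Stmt16Aux

/-- For the algebra substitution `T` one has `E† ∘ T = −T ∘ E` and `E ∘ T = −T ∘ E†`;
consequently `T` restricts to a linear isomorphism from `H^S_{a,b}` onto `H^{S†}_{b,a}`. -/
theorem stmt_16 (p : ℕ) :
    (∀ f : QPoly p, opEd p (aeval (Ttgt p) f) = - aeval (Ttgt p) (opE p f)) ∧
    (∀ f : QPoly p, opE p (aeval (Ttgt p) f) = - aeval (Ttgt p) (opEd p f)) ∧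
    ∀ a b : ℕ, ∃ e : qHS p a b ≃ₗ[ℂ] qHSd p b a,
      ∀ x : qHS p a b, (e x : QPoly p) = aeval (Ttgt p) (x : QPoly p) := by
  refine ⟨Stmt16Aux.EdT, Stmt16Aux.ET, ?_⟩
  intro a b
  set Tl : QPoly p →ₗ[ℂ] QPoly p := (aeval (Ttgt p)).toLinearMap with hTl
  have hmemS : ∀ x ∈ qHSd p b a, aeval (Ttgt p) x ∈ qHS p a b := by
    intro x hx
    refine ⟨⟨Stmt16Aux.T_mem_Pab hx.1.1, ?_⟩, ?_⟩
    · have h0 : qlap p x = 0 := hx.1.2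
      exact LinearMap.mem_ker.mpr (by rw [Stmt16Aux.lapT, h0, map_zero])
    · have h0 : opEd p x = 0 := hx.2
      exact LinearMap.mem_ker.mpr (by rw [Stmt16Aux.ET, h0, map_zero, neg_zero])
  have hmemSd : ∀ x ∈ qHS p a b, aeval (Ttgt p) x ∈ qHSd p b a := by
    intro x hx
    refine ⟨⟨Stmt16Aux.T_mem_Pab hx.1.1, ?_⟩, ?_⟩
    · have h0 : qlap p x = 0 := hx.1.2
      exact LinearMap.mem_ker.mpr (by rw [Stmt16Aux.lapT, h0, map_zero])
    · have h0 : opE p x = 0 := hx.2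
      exact LinearMap.mem_ker.mpr (by rw [Stmt16Aux.EdT, h0, map_zero, neg_zero])
  have hcancel : ∀ (n : ℕ) (y : QPoly p), ((-1:ℂ)^n) • ((-1:ℂ)^n) • y = y := by
    intro n y
    rw [smul_smul, ← mul_pow]
    norm_num
  have hf : ∀ x ∈ qHS p a b, Tl x ∈ qHSd p b a := fun x hx => hmemSd x hx
  have hb : ∀ x ∈ qHSd p b a, ((((-1:ℂ))^(a+b)) • Tl) x ∈ qHS p a b := by
    intro x hx
    rw [LinearMap.smul_apply]
    exact Submodule.smul_mem _ _ (hmemS x hx)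
  refine ⟨LinearEquiv.ofLinear (Tl.restrict hf) (((((-1:ℂ))^(a+b)) • Tl).restrict hb)
    ?_ ?_, ?_⟩
  · apply LinearMap.ext
    rintro ⟨x, hx⟩
    apply Subtype.ext
    simp only [LinearMap.coe_comp, Function.comp_apply, LinearMap.restrict_apply,
      LinearMap.smul_apply, LinearMap.id_coe, id_eq]
    show Tl (((-1:ℂ)^(a+b)) • Tl x) = x
    rw [map_smul]
    have : Tl (Tl x) = ((-1:ℂ)^(b+a)) • x := by
      show aeval (Ttgt p) (aeval (Ttgt p) x) = _
      rw [Stmt16Aux.T_T, Stmt16Aux.neg_eval hx.1.1]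
    rw [this, Nat.add_comm b a, hcancel]
  · apply LinearMap.ext
    rintro ⟨x, hx⟩
    apply Subtype.ext
    simp only [LinearMap.coe_comp, Function.comp_apply, LinearMap.restrict_apply,
      LinearMap.smul_apply, LinearMap.id_coe, id_eq]
    show ((-1:ℂ)^(a+b)) • Tl (Tl x) = x
    have : Tl (Tl x) = ((-1:ℂ)^(a+b)) • x := by
      show aeval (Ttgt p) (aeval (Ttgt p) x) = _
      rw [Stmt16Aux.T_T, Stmt16Aux.neg_eval hx.1.1]
    rw [this, hcancel]
  · intro x
    rfl
end
end
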